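/- (Lemma 6) In LIEC-SGD under L-Lipschitz gradients and bounded variance σ², if η ≤ δ/(√6·L), then (1/N)∑_{t=0}^{T−1}∑ᵢ E‖x̄ₜ − xᵗⁱ‖² ≤ 2(1−δ)η²Tσ²/δ² + (6(1−δ)η²/δ²)∑_{t=0}^{T−1} E‖∇f(x̄ₜ)‖². -/

import Mathlib

open MeasureTheory Finset

section Aux
variable {E : Type*} [NormedAddCommGroup E] [InnerProductSpace ℝ E]
variable {Ω : Type*} [MeasurableSpace Ω] {μ : Measure Ω}

lemma aux_norm_sum_sq {ι : Type*} (s : Finset ι) (v : ι → E) :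
    ‖∑ i ∈ s, v i‖ ^ 2 ≤ (s.card : ℝ) * ∑ i ∈ s, ‖v i‖ ^ 2 := by
  calc ‖∑ i ∈ s, v i‖ ^ 2 ≤ (∑ i ∈ s, ‖v i‖) ^ 2 := by
        exact pow_le_pow_left₀ (norm_nonneg _) (norm_sum_le _ _) 2
    _ ≤ (s.card : ℝ) * ∑ i ∈ s, ‖v i‖ ^ 2 := by
        have := sq_sum_le_card_mul_sum_sq (s := s) (f := fun i => ‖v i‖)
        push_cast at this ⊢
        convert this using 2 <;> simp

lemma aux_var_around_mean {N : ℕ} (hN : 0 < N) (a : Fin N → E) :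
    ∑ i, ‖a i - (N : ℝ)⁻¹ • ∑ j, a j‖ ^ 2 ≤ ∑ i, ‖a i‖ ^ 2 := by
  set m : E := (N : ℝ)⁻¹ • ∑ j, a j with hm
  have hsum : ∑ j, a j = (N : ℝ) • m := by
    rw [hm, smul_smul, mul_inv_cancel₀ (by exact_mod_cast hN.ne'), one_smul]
  have hexp : ∀ i, ‖a i - m‖ ^ 2 = ‖a i‖ ^ 2 - 2 * (inner ℝ (a i) m : ℝ) + ‖m‖ ^ 2 :=
    fun i => norm_sub_sq_real _ _
  have hinner : ∑ i, (inner ℝ (a i) m : ℝ) = (N : ℝ) * ‖m‖ ^ 2 := by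
    rw [← sum_inner, hsum, real_inner_smul_left, real_inner_self_eq_norm_sq]
  calc ∑ i, ‖a i - m‖ ^ 2
      = ∑ i, ‖a i‖ ^ 2 - 2 * ((N : ℝ) * ‖m‖ ^ 2) + (N : ℝ) * ‖m‖ ^ 2 := by
        simp_rw [hexp]
        rw [sum_add_distrib, sum_sub_distrib, ← mul_sum, hinner, sum_const, card_univ,
          Fintype.card_fin, nsmul_eq_mul]
    _ ≤ ∑ i, ‖a i‖ ^ 2 := by nlinarith [sq_nonneg ‖m‖, (Nat.cast_pos (α := ℝ)).mpr hN]

lemma aux_integrable_inner {f h : Ω → E} (hf : MemLp f 2 μ) (hh : MemLp h 2 μ) :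
    Integrable (fun ω => (inner ℝ (f ω) (h ω) : ℝ)) μ := by
  have := L2.integrable_inner (𝕜 := ℝ) (hf.toLp f) (hh.toLp h)
  refine this.congr ?_
  filter_upwards [hf.coeFn_toLp, hh.coeFn_toLp] with ω h1 h2
  rw [h1, h2]

lemma aux_integrable_sq_norm {f : Ω → E} (hf : MemLp f 2 μ) :
    Integrable (fun ω => ‖f ω‖ ^ 2) μ :=
  (memLp_two_iff_integrable_sq_norm hf.aestronglyMeasurable).mp hf

lemma aux_expand {f h : Ω → E} (hf : MemLp f 2 μ) (hh : MemLp h 2 μ) :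
    ∫ ω, ‖f ω + h ω‖ ^ 2 ∂μ
      = ∫ ω, ‖f ω‖ ^ 2 ∂μ + 2 * ∫ ω, (inner ℝ (f ω) (h ω) : ℝ) ∂μ + ∫ ω, ‖h ω‖ ^ 2 ∂μ := by
  have key : ∀ ω, ‖f ω + h ω‖ ^ 2
      = ‖f ω‖ ^ 2 + 2 * (inner ℝ (f ω) (h ω) : ℝ) + ‖h ω‖ ^ 2 := fun ω => norm_add_sq_real _ _
  simp_rw [key]
  have e1 : Integrable (fun ω => ‖f ω‖ ^ 2 + 2 * (inner ℝ (f ω) (h ω) : ℝ)) μ :=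
    (aux_integrable_sq_norm hf).add ((aux_integrable_inner hf hh).const_mul 2)
  rw [show (fun ω => ‖f ω‖ ^ 2 + 2 * (inner ℝ (f ω) (h ω) : ℝ) + ‖h ω‖ ^ 2)
      = (fun ω => (‖f ω‖ ^ 2 + 2 * (inner ℝ (f ω) (h ω) : ℝ)) + ‖h ω‖ ^ 2) from rfl] at *
  rw [integral_add e1 (aux_integrable_sq_norm hh),
    integral_add (aux_integrable_sq_norm hf) ((aux_integrable_inner hf hh).const_mul 2),
    MeasureTheory.integral_const_mul]

end Aux


lemma aux_count (K T : ℕ) (hK : 0 < K) (c : ℕ → ℝ) (hc : ∀ τ, 0 ≤ c τ) :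
    ∑ t ∈ Finset.range T, ∑ τ ∈ Finset.Ico (K * (t / K)) t, c τ
      ≤ (K : ℝ) * ∑ τ ∈ Finset.range T, c τ := by
  classical
  have h1 : ∀ t ∈ Finset.range T,
      ∑ τ ∈ Finset.Ico (K * (t / K)) t, c τ
        = ∑ τ ∈ Finset.range T, if K * (t / K) ≤ τ ∧ τ < t then c τ else 0 := by
    intro t ht
    rw [← Finset.sum_filter]
    congr 1
    ext τ
    simp only [Finset.mem_filter, Finset.mem_range, Finset.mem_Ico]
    have htT : t < T := Finset.mem_range.mp ht
    constructor
    · rintro ⟨ha, hb⟩; exact ⟨lt_trans hb htT, ha, hb⟩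
    · rintro ⟨_, ha, hb⟩; exact ⟨ha, hb⟩
  rw [Finset.sum_congr rfl h1, Finset.sum_comm, Finset.mul_sum]
  refine Finset.sum_le_sum fun τ hτ => ?_
  rw [← Finset.sum_filter, Finset.sum_const, nsmul_eq_mul]
  have hsub : (Finset.range T).filter (fun t => K * (t / K) ≤ τ ∧ τ < t)
      ⊆ Finset.Ico (τ + 1) (τ + K) := by
    intro t ht
    simp only [Finset.mem_filter, Finset.mem_range] at ht
    obtain ⟨htT, hle, hlt⟩ := ht
    have h3 := Nat.div_add_mod t K
    have h4 := Nat.mod_lt t hK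
    simp only [Finset.mem_Ico]
    omega
  have hcard : ((Finset.range T).filter (fun t => K * (t / K) ≤ τ ∧ τ < t)).card ≤ K := by
    have h5 := Finset.card_le_card hsub
    rw [Nat.card_Ico] at h5
    omega
  exact mul_le_mul_of_nonneg_right (by exact_mod_cast hcard) (hc τ)

set_option maxHeartbeats 2000000 in
/-- (Lemma 6) In LIEC-SGD under `L`-Lipschitz gradients and stochastic-gradient variance
bounded by `σ²`, if `η ≤ δ/(√6 L)`, then
`(1/N)∑_{t<T} ∑ i E‖x̄ t − x t i‖² ≤ 2(1−δ)η²Tσ²/δ² + (6(1−δ)η²/δ²)∑_{t<T} E‖∇f(x̄ t)‖²`.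
Workers synchronize every `K = ⌊1/δ⌋` iterations; between synchronizations the deviation
`x̄ t − x t i` is `η` times the accumulated difference of the compression residuals
`g τ i − C(g τ i)` and their average over the workers (hypothesis `hdev`); the compressor
is a `δ`-contraction (hypothesis `hcontr`). -/
theorem liec_accumulated_discrepancy_bound (d N T : ℕ) (hN : 0 < N) (hT : 0 < T)
    (δ η L σ : ℝ) (hδ0 : 0 < δ) (hδ1 : δ ≤ 1) (hL : 0 < L) (hσ : 0 ≤ σ)
    (hη0 : 0 < η) (hη : η ≤ δ / (Real.sqrt 6 * L))
    {Ω : Type*} [MeasurableSpace Ω] (μ : Measure Ω) [IsProbabilityMeasure μ]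
    (f : Fin N → EuclideanSpace ℝ (Fin d) → ℝ)
    (gf : Fin N → EuclideanSpace ℝ (Fin d) → EuclideanSpace ℝ (Fin d))
    (gF : EuclideanSpace ℝ (Fin d) → EuclideanSpace ℝ (Fin d))
    (hgrad : ∀ i y, HasGradientAt (f i) (gf i y) y)
    (hlip : ∀ i y z, ‖gf i y - gf i z‖ ≤ L * ‖y - z‖)
    (hsplit : ∀ i y, gf i y = gF y)
    (x g q : ℕ → Fin N → Ω → EuclideanSpace ℝ (Fin d))
    (hL2g : ∀ t i, MemLp (g t i) 2 μ) (hL2q : ∀ t i, MemLp (q t i) 2 μ)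
    (hL2x : ∀ t i, MemLp (x t i) 2 μ)
    (hL2gF : ∀ t, MemLp (fun ω => gF ((N : ℝ)⁻¹ • ∑ j, x t j ω)) 2 μ)
    (hvar : ∀ t i, ∫ ω, ‖g t i ω - gf i (x t i ω)‖ ^ 2 ∂μ ≤ σ ^ 2)
    (hunb : ∀ t i,
      ∫ ω, (inner ℝ (g t i ω - gf i (x t i ω)) (gf i (x t i ω)) : ℝ) ∂μ = 0)
    (hcontr : ∀ t i,
      ∫ ω, ‖g t i ω - q t i ω‖ ^ 2 ∂μ ≤ (1 - δ) * ∫ ω, ‖g t i ω‖ ^ 2 ∂μ)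
    (hdev : ∀ t i ω,
      ((N : ℝ)⁻¹ • ∑ j, x t j ω) - x t i ω
        = η • ∑ τ ∈ Finset.Ico (⌊1 / δ⌋₊ * (t / ⌊1 / δ⌋₊)) t,
            ((g τ i ω - q τ i ω) - (N : ℝ)⁻¹ • ∑ j, (g τ j ω - q τ j ω))) :
    (N : ℝ)⁻¹ * ∑ t ∈ Finset.range T, ∑ i,
        ∫ ω, ‖((N : ℝ)⁻¹ • ∑ j, x t j ω) - x t i ω‖ ^ 2 ∂μ
      ≤ 2 * (1 - δ) * η ^ 2 * T * σ ^ 2 / δ ^ 2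
        + 6 * (1 - δ) * η ^ 2 / δ ^ 2 * ∑ t ∈ Finset.range T,
            ∫ ω, ‖gF ((N : ℝ)⁻¹ • ∑ j, x t j ω)‖ ^ 2 ∂μ := by
  classical
  have hNR : (0 : ℝ) < N := Nat.cast_pos.mpr hN
  have h1δ : (1 : ℝ) ≤ 1 / δ := by rw [le_div_iff₀ hδ0]; linarith
  have hFK1 : 1 ≤ ⌊1 / δ⌋₊ := Nat.le_floor (by exact_mod_cast h1δ)
  have hFK0 : 0 < ⌊1 / δ⌋₊ := hFK1
  have hKδ : ((⌊1 / δ⌋₊ : ℕ) : ℝ) ≤ 1 / δ := Nat.floor_le (by positivity)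
  have hδ' : (0 : ℝ) ≤ 1 - δ := by linarith
  set i0 : Fin N := ⟨0, hN⟩ with hi0
  have hlipF : ∀ y z, ‖gF y - gF z‖ ≤ L * ‖y - z‖ := by
    intro y z
    have h := hlip i0 y z
    simp only [hsplit] at h
    exact h
  have hcF : Continuous gF := by
    have hlw : LipschitzWith (Real.toNNReal L) gF := by
      apply LipschitzWith.of_dist_le_mul
      intro y z
      rw [dist_eq_norm, dist_eq_norm, Real.coe_toNNReal L hL.le]
      exact hlipF y z
    exact hlw.continuous
  -- MemLp facts
  have hma : ∀ τ i, MemLp (fun ω => g τ i ω - q τ i ω) 2 μ :=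
    fun τ i => (hL2g τ i).sub (hL2q τ i)
  have hmab : ∀ τ, MemLp (fun ω => (N : ℝ)⁻¹ • ∑ j, (g τ j ω - q τ j ω)) 2 μ := by
    intro τ
    have h := memLp_finset_sum' (μ := μ) (p := 2) Finset.univ (fun j _ => hma τ j)
    have h2 := h.const_smul ((N : ℝ)⁻¹)
    have heq : ((N : ℝ)⁻¹ • ∑ i : Fin N, (fun ω => g τ i ω - q τ i ω))
        = (fun ω => (N : ℝ)⁻¹ • ∑ j, (g τ j ω - q τ j ω)) := by
      funext ω
      simp [Finset.sum_apply]
    rwa [heq] at h2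
  have hmd : ∀ τ i, MemLp (fun ω => (g τ i ω - q τ i ω) - (N : ℝ)⁻¹ • ∑ j, (g τ j ω - q τ j ω)) 2 μ :=
    fun τ i => (hma τ i).sub (hmab τ)
  have hmxb : ∀ t, MemLp (fun ω => (N : ℝ)⁻¹ • ∑ j, x t j ω) 2 μ := by
    intro t
    have h := memLp_finset_sum' (μ := μ) (p := 2) Finset.univ (fun j _ => hL2x t j)
    have h2 := h.const_smul ((N : ℝ)⁻¹)
    have heq : ((N : ℝ)⁻¹ • ∑ i : Fin N, x t i)
        = (fun ω => (N : ℝ)⁻¹ • ∑ j, x t j ω) := by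
      funext ω
      simp [Finset.sum_apply]
    rwa [heq] at h2
  have hmdev : ∀ t i, MemLp (fun ω => ((N : ℝ)⁻¹ • ∑ j, x t j ω) - x t i ω) 2 μ :=
    fun t i => (hmxb t).sub (hL2x t i)
  have hmgFx : ∀ t i, MemLp (fun ω => gF (x t i ω)) 2 μ := by
    intro t i
    have hmeas : AEStronglyMeasurable (fun ω => gF (x t i ω)) μ :=
      hcF.comp_aestronglyMeasurable (hL2x t i).aestronglyMeasurable
    have hbound : MemLp (fun ω => ‖gF ((N : ℝ)⁻¹ • ∑ j, x t j ω)‖ + L * ‖((N : ℝ)⁻¹ • ∑ j, x t j ω) - x t i ω‖) 2 μ :=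
      ((hL2gF t).norm).add (((hmdev t i).norm).const_mul L)
    refine hbound.of_le hmeas (Filter.Eventually.of_forall fun ω => ?_)
    have h2 : ‖gF (x t i ω)‖ ≤ ‖gF ((N : ℝ)⁻¹ • ∑ j, x t j ω)‖ + L * ‖((N : ℝ)⁻¹ • ∑ j, x t j ω) - x t i ω‖ := by
      have h1 : ‖gF (x t i ω) - gF ((N : ℝ)⁻¹ • ∑ j, x t j ω)‖ ≤ L * ‖((N : ℝ)⁻¹ • ∑ j, x t j ω) - x t i ω‖ := by
        have h := hlipF (x t i ω) ((N : ℝ)⁻¹ • ∑ j, x t j ω)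
        rwa [norm_sub_rev (x t i ω)] at h
      have h0 : gF ((N : ℝ)⁻¹ • ∑ j, x t j ω) + (gF (x t i ω) - gF ((N : ℝ)⁻¹ • ∑ j, x t j ω)) = gF (x t i ω) := by abel
      calc ‖gF (x t i ω)‖ = ‖gF ((N : ℝ)⁻¹ • ∑ j, x t j ω) + (gF (x t i ω) - gF ((N : ℝ)⁻¹ • ∑ j, x t j ω))‖ := by rw [h0]
        _ ≤ ‖gF ((N : ℝ)⁻¹ • ∑ j, x t j ω)‖ + ‖gF (x t i ω) - gF ((N : ℝ)⁻¹ • ∑ j, x t j ω)‖ := norm_add_le _ _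
        _ ≤ ‖gF ((N : ℝ)⁻¹ • ∑ j, x t j ω)‖ + L * ‖((N : ℝ)⁻¹ • ∑ j, x t j ω) - x t i ω‖ := by linarith
    calc ‖gF (x t i ω)‖ ≤ ‖gF ((N : ℝ)⁻¹ • ∑ j, x t j ω)‖ + L * ‖((N : ℝ)⁻¹ • ∑ j, x t j ω) - x t i ω‖ := h2
      _ ≤ ‖‖gF ((N : ℝ)⁻¹ • ∑ j, x t j ω)‖ + L * ‖((N : ℝ)⁻¹ • ∑ j, x t j ω) - x t i ω‖‖ := by
          rw [Real.norm_eq_abs]; exact le_abs_self _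
  -- Step 1
  have step1 : ∀ t i, ∫ ω, ‖((N : ℝ)⁻¹ • ∑ j, x t j ω) - x t i ω‖ ^ 2 ∂μ
      ≤ η ^ 2 * (⌊1 / δ⌋₊ : ℝ) * ∑ τ ∈ Finset.Ico (⌊1 / δ⌋₊ * (t / ⌊1 / δ⌋₊)) t, ∫ ω, ‖(g τ i ω - q τ i ω) - (N : ℝ)⁻¹ • ∑ j, (g τ j ω - q τ j ω)‖ ^ 2 ∂μ := by
    intro t i
    have hpt : ∀ ω, ‖((N : ℝ)⁻¹ • ∑ j, x t j ω) - x t i ω‖ ^ 2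
        ≤ η ^ 2 * (⌊1 / δ⌋₊ : ℝ) * ∑ τ ∈ Finset.Ico (⌊1 / δ⌋₊ * (t / ⌊1 / δ⌋₊)) t, ‖(g τ i ω - q τ i ω) - (N : ℝ)⁻¹ • ∑ j, (g τ j ω - q τ j ω)‖ ^ 2 := by
      intro ω
      rw [hdev t i ω, norm_smul, Real.norm_eq_abs, mul_pow, sq_abs]
      have h1 := aux_norm_sum_sq (Finset.Ico (⌊1 / δ⌋₊ * (t / ⌊1 / δ⌋₊)) t) (fun τ => (g τ i ω - q τ i ω) - (N : ℝ)⁻¹ • ∑ j, (g τ j ω - q τ j ω))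
      have hcard : (((Finset.Ico (⌊1 / δ⌋₊ * (t / ⌊1 / δ⌋₊)) t).card : ℕ) : ℝ) ≤ (⌊1 / δ⌋₊ : ℝ) := by
        have h2 : (Finset.Ico (⌊1 / δ⌋₊ * (t / ⌊1 / δ⌋₊)) t).card ≤ ⌊1 / δ⌋₊ := by
          rw [Nat.card_Ico]
          have h3 := Nat.div_add_mod t ⌊1 / δ⌋₊
          have h4 := Nat.mod_lt t hFK0
          omega
        exact_mod_cast h2
      have hnn : (0 : ℝ) ≤ ∑ τ ∈ Finset.Ico (⌊1 / δ⌋₊ * (t / ⌊1 / δ⌋₊)) t, ‖(g τ i ω - q τ i ω) - (N : ℝ)⁻¹ • ∑ j, (g τ j ω - q τ j ω)‖ ^ 2 :=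
        Finset.sum_nonneg fun τ _ => sq_nonneg _
      calc η ^ 2 * ‖∑ τ ∈ Finset.Ico (⌊1 / δ⌋₊ * (t / ⌊1 / δ⌋₊)) t, ((g τ i ω - q τ i ω) - (N : ℝ)⁻¹ • ∑ j, (g τ j ω - q τ j ω))‖ ^ 2
          ≤ η ^ 2 * (((Finset.Ico (⌊1 / δ⌋₊ * (t / ⌊1 / δ⌋₊)) t).card : ℝ) * ∑ τ ∈ Finset.Ico (⌊1 / δ⌋₊ * (t / ⌊1 / δ⌋₊)) t, ‖(g τ i ω - q τ i ω) - (N : ℝ)⁻¹ • ∑ j, (g τ j ω - q τ j ω)‖ ^ 2) :=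
            mul_le_mul_of_nonneg_left h1 (sq_nonneg η)
        _ ≤ η ^ 2 * ((⌊1 / δ⌋₊ : ℝ) * ∑ τ ∈ Finset.Ico (⌊1 / δ⌋₊ * (t / ⌊1 / δ⌋₊)) t, ‖(g τ i ω - q τ i ω) - (N : ℝ)⁻¹ • ∑ j, (g τ j ω - q τ j ω)‖ ^ 2) :=
            mul_le_mul_of_nonneg_left (mul_le_mul_of_nonneg_right hcard hnn) (sq_nonneg η)
        _ = η ^ 2 * (⌊1 / δ⌋₊ : ℝ) * ∑ τ ∈ Finset.Ico (⌊1 / δ⌋₊ * (t / ⌊1 / δ⌋₊)) t, ‖(g τ i ω - q τ i ω) - (N : ℝ)⁻¹ • ∑ j, (g τ j ω - q τ j ω)‖ ^ 2 := by ring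
    have hint : Integrable (fun ω => η ^ 2 * (⌊1 / δ⌋₊ : ℝ) *
        ∑ τ ∈ Finset.Ico (⌊1 / δ⌋₊ * (t / ⌊1 / δ⌋₊)) t, ‖(g τ i ω - q τ i ω) - (N : ℝ)⁻¹ • ∑ j, (g τ j ω - q τ j ω)‖ ^ 2) μ :=
      (integrable_finset_sum _ (fun τ _ => aux_integrable_sq_norm (hmd τ i))).const_mul _
    calc ∫ ω, ‖((N : ℝ)⁻¹ • ∑ j, x t j ω) - x t i ω‖ ^ 2 ∂μ
        ≤ ∫ ω, (η ^ 2 * (⌊1 / δ⌋₊ : ℝ) * ∑ τ ∈ Finset.Ico (⌊1 / δ⌋₊ * (t / ⌊1 / δ⌋₊)) t, ‖(g τ i ω - q τ i ω) - (N : ℝ)⁻¹ • ∑ j, (g τ j ω - q τ j ω)‖ ^ 2) ∂μ :=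
          integral_mono_of_nonneg (Filter.Eventually.of_forall fun ω => sq_nonneg _) hint
            (Filter.Eventually.of_forall hpt)
      _ = η ^ 2 * (⌊1 / δ⌋₊ : ℝ) * ∑ τ ∈ Finset.Ico (⌊1 / δ⌋₊ * (t / ⌊1 / δ⌋₊)) t, ∫ ω, ‖(g τ i ω - q τ i ω) - (N : ℝ)⁻¹ • ∑ j, (g τ j ω - q τ j ω)‖ ^ 2 ∂μ := by
          rw [MeasureTheory.integral_const_mul,
            integral_finset_sum _ (fun τ _ => aux_integrable_sq_norm (hmd τ i))]
  -- Step 2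
  have step2 : ∀ τ, ∑ i, ∫ ω, ‖(g τ i ω - q τ i ω) - (N : ℝ)⁻¹ • ∑ j, (g τ j ω - q τ j ω)‖ ^ 2 ∂μ ≤ ∑ i, ∫ ω, ‖g τ i ω - q τ i ω‖ ^ 2 ∂μ := by
    intro τ
    rw [← integral_finset_sum _ (fun i _ => aux_integrable_sq_norm (hmd τ i)),
      ← integral_finset_sum _ (fun i _ => aux_integrable_sq_norm (hma τ i))]
    refine integral_mono_of_nonneg (Filter.Eventually.of_forall fun ω =>
        Finset.sum_nonneg fun i _ => sq_nonneg _)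
      (integrable_finset_sum _ (fun i _ => aux_integrable_sq_norm (hma τ i)))
      (Filter.Eventually.of_forall fun ω => ?_)
    exact aux_var_around_mean hN (fun j => g τ j ω - q τ j ω)
  -- Step 4
  have step4 : ∀ τ i, ∫ ω, ‖g τ i ω‖ ^ 2 ∂μ ≤ σ ^ 2 + ∫ ω, ‖gF (x τ i ω)‖ ^ 2 ∂μ := by
    intro τ i
    have hmh : MemLp (fun ω => gf i (x τ i ω)) 2 μ := by
      simp only [hsplit]; exact hmgFx τ i
    have hmf : MemLp (fun ω => g τ i ω - gf i (x τ i ω)) 2 μ := (hL2g τ i).sub hmh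
    have hrw : ∫ ω, ‖g τ i ω‖ ^ 2 ∂μ
        = ∫ ω, ‖(g τ i ω - gf i (x τ i ω)) + gf i (x τ i ω)‖ ^ 2 ∂μ := by
      congr 1
      funext ω
      congr 2
      abel
    have h2 : ∫ ω, ‖gf i (x τ i ω)‖ ^ 2 ∂μ = ∫ ω, ‖gF (x τ i ω)‖ ^ 2 ∂μ := by
      simp only [hsplit]
    rw [hrw, aux_expand hmf hmh, hunb τ i, h2]
    have h3 := hvar τ i
    linarith
  -- Step 5
  have step5 : ∀ τ i, ∫ ω, ‖gF (x τ i ω)‖ ^ 2 ∂μ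
      ≤ 2 * (∫ ω, ‖gF ((N : ℝ)⁻¹ • ∑ j, x τ j ω)‖ ^ 2 ∂μ) + 2 * L ^ 2 * (∫ ω, ‖((N : ℝ)⁻¹ • ∑ j, x τ j ω) - x τ i ω‖ ^ 2 ∂μ) := by
    intro τ i
    have hpt : ∀ ω, ‖gF (x τ i ω)‖ ^ 2
        ≤ 2 * ‖gF ((N : ℝ)⁻¹ • ∑ j, x τ j ω)‖ ^ 2 + 2 * L ^ 2 * ‖((N : ℝ)⁻¹ • ∑ j, x τ j ω) - x τ i ω‖ ^ 2 := by
      intro ω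
      have h1 : ‖gF (x τ i ω) - gF ((N : ℝ)⁻¹ • ∑ j, x τ j ω)‖ ≤ L * ‖((N : ℝ)⁻¹ • ∑ j, x τ j ω) - x τ i ω‖ := by
        have h := hlipF (x τ i ω) ((N : ℝ)⁻¹ • ∑ j, x τ j ω)
        rwa [norm_sub_rev (x τ i ω)] at h
      have h0 : gF ((N : ℝ)⁻¹ • ∑ j, x τ j ω) + (gF (x τ i ω) - gF ((N : ℝ)⁻¹ • ∑ j, x τ j ω)) = gF (x τ i ω) := by abel
      have h2 : ‖gF (x τ i ω)‖ ≤ ‖gF ((N : ℝ)⁻¹ • ∑ j, x τ j ω)‖ + L * ‖((N : ℝ)⁻¹ • ∑ j, x τ j ω) - x τ i ω‖ := by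
        calc ‖gF (x τ i ω)‖ = ‖gF ((N : ℝ)⁻¹ • ∑ j, x τ j ω) + (gF (x τ i ω) - gF ((N : ℝ)⁻¹ • ∑ j, x τ j ω))‖ := by rw [h0]
          _ ≤ ‖gF ((N : ℝ)⁻¹ • ∑ j, x τ j ω)‖ + ‖gF (x τ i ω) - gF ((N : ℝ)⁻¹ • ∑ j, x τ j ω)‖ := norm_add_le _ _
          _ ≤ ‖gF ((N : ℝ)⁻¹ • ∑ j, x τ j ω)‖ + L * ‖((N : ℝ)⁻¹ • ∑ j, x τ j ω) - x τ i ω‖ := by linarith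
      nlinarith [norm_nonneg (gF (x τ i ω)), norm_nonneg (gF ((N : ℝ)⁻¹ • ∑ j, x τ j ω)),
        mul_nonneg hL.le (norm_nonneg (((N : ℝ)⁻¹ • ∑ j, x τ j ω) - x τ i ω)),
        sq_nonneg (‖gF ((N : ℝ)⁻¹ • ∑ j, x τ j ω)‖ - L * ‖((N : ℝ)⁻¹ • ∑ j, x τ j ω) - x τ i ω‖)]
    have hint : Integrable (fun ω =>
        2 * ‖gF ((N : ℝ)⁻¹ • ∑ j, x τ j ω)‖ ^ 2 + 2 * L ^ 2 * ‖((N : ℝ)⁻¹ • ∑ j, x τ j ω) - x τ i ω‖ ^ 2) μ :=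
      ((aux_integrable_sq_norm (hL2gF τ)).const_mul 2).add
        ((aux_integrable_sq_norm (hmdev τ i)).const_mul (2 * L ^ 2))
    calc ∫ ω, ‖gF (x τ i ω)‖ ^ 2 ∂μ
        ≤ ∫ ω, (2 * ‖gF ((N : ℝ)⁻¹ • ∑ j, x τ j ω)‖ ^ 2 + 2 * L ^ 2 * ‖((N : ℝ)⁻¹ • ∑ j, x τ j ω) - x τ i ω‖ ^ 2) ∂μ :=
          integral_mono_of_nonneg (Filter.Eventually.of_forall fun ω => sq_nonneg _) hint
            (Filter.Eventually.of_forall hpt)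
      _ = 2 * (∫ ω, ‖gF ((N : ℝ)⁻¹ • ∑ j, x τ j ω)‖ ^ 2 ∂μ) + 2 * L ^ 2 * (∫ ω, ‖((N : ℝ)⁻¹ • ∑ j, x τ j ω) - x τ i ω‖ ^ 2 ∂μ) := by
          rw [integral_add ((aux_integrable_sq_norm (hL2gF τ)).const_mul 2)
            ((aux_integrable_sq_norm (hmdev τ i)).const_mul (2 * L ^ 2)),
            MeasureTheory.integral_const_mul, MeasureTheory.integral_const_mul]
  -- combined per-τ bound
  have main2 : ∀ τ, ∑ i, ∫ ω, ‖(g τ i ω - q τ i ω) - (N : ℝ)⁻¹ • ∑ j, (g τ j ω - q τ j ω)‖ ^ 2 ∂μ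
      ≤ (1 - δ) * ((N : ℝ) * σ ^ 2 + 2 * (N : ℝ) * (∫ ω, ‖gF ((N : ℝ)⁻¹ • ∑ j, x τ j ω)‖ ^ 2 ∂μ)
          + 2 * L ^ 2 * ∑ i, ∫ ω, ‖((N : ℝ)⁻¹ • ∑ j, x τ j ω) - x τ i ω‖ ^ 2 ∂μ) := by
    intro τ
    have s45 : ∀ i : Fin N, ∫ ω, ‖g τ i ω - q τ i ω‖ ^ 2 ∂μ
        ≤ (1 - δ) * (σ ^ 2 + 2 * (∫ ω, ‖gF ((N : ℝ)⁻¹ • ∑ j, x τ j ω)‖ ^ 2 ∂μ) + 2 * L ^ 2 * (∫ ω, ‖((N : ℝ)⁻¹ • ∑ j, x τ j ω) - x τ i ω‖ ^ 2 ∂μ)) := by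
      intro i
      have h4 := step4 τ i
      have h5 := step5 τ i
      calc ∫ ω, ‖g τ i ω - q τ i ω‖ ^ 2 ∂μ ≤ (1 - δ) * ∫ ω, ‖g τ i ω‖ ^ 2 ∂μ := hcontr τ i
        _ ≤ (1 - δ) * (σ ^ 2 + 2 * (∫ ω, ‖gF ((N : ℝ)⁻¹ • ∑ j, x τ j ω)‖ ^ 2 ∂μ) + 2 * L ^ 2 * (∫ ω, ‖((N : ℝ)⁻¹ • ∑ j, x τ j ω) - x τ i ω‖ ^ 2 ∂μ)) :=
            mul_le_mul_of_nonneg_left (by linarith) hδ'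
    calc ∑ i, ∫ ω, ‖(g τ i ω - q τ i ω) - (N : ℝ)⁻¹ • ∑ j, (g τ j ω - q τ j ω)‖ ^ 2 ∂μ ≤ ∑ i, ∫ ω, ‖g τ i ω - q τ i ω‖ ^ 2 ∂μ := step2 τ
      _ ≤ ∑ i : Fin N, ((1 - δ) * (σ ^ 2 + 2 * (∫ ω, ‖gF ((N : ℝ)⁻¹ • ∑ j, x τ j ω)‖ ^ 2 ∂μ) + 2 * L ^ 2 * (∫ ω, ‖((N : ℝ)⁻¹ • ∑ j, x τ j ω) - x τ i ω‖ ^ 2 ∂μ))) :=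
          Finset.sum_le_sum fun i _ => s45 i
      _ = (1 - δ) * ((N : ℝ) * σ ^ 2 + 2 * (N : ℝ) * (∫ ω, ‖gF ((N : ℝ)⁻¹ • ∑ j, x τ j ω)‖ ^ 2 ∂μ)
            + 2 * L ^ 2 * ∑ i, ∫ ω, ‖((N : ℝ)⁻¹ • ∑ j, x τ j ω) - x τ i ω‖ ^ 2 ∂μ) := by
          rw [← Finset.mul_sum]
          congr 1
          simp only [Finset.sum_add_distrib, Finset.sum_const, Finset.card_univ,
            Fintype.card_fin, nsmul_eq_mul, ← Finset.mul_sum]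
          ring
  -- Step over t
  have main1 : ∀ t, ∑ i, ∫ ω, ‖((N : ℝ)⁻¹ • ∑ j, x t j ω) - x t i ω‖ ^ 2 ∂μ
      ≤ η ^ 2 * (⌊1 / δ⌋₊ : ℝ) * ∑ τ ∈ Finset.Ico (⌊1 / δ⌋₊ * (t / ⌊1 / δ⌋₊)) t, ∑ i, ∫ ω, ‖(g τ i ω - q τ i ω) - (N : ℝ)⁻¹ • ∑ j, (g τ j ω - q τ j ω)‖ ^ 2 ∂μ := by
    intro t
    calc ∑ i, ∫ ω, ‖((N : ℝ)⁻¹ • ∑ j, x t j ω) - x t i ω‖ ^ 2 ∂μ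
        ≤ ∑ i : Fin N, (η ^ 2 * (⌊1 / δ⌋₊ : ℝ) * ∑ τ ∈ Finset.Ico (⌊1 / δ⌋₊ * (t / ⌊1 / δ⌋₊)) t, ∫ ω, ‖(g τ i ω - q τ i ω) - (N : ℝ)⁻¹ • ∑ j, (g τ j ω - q τ j ω)‖ ^ 2 ∂μ) :=
          Finset.sum_le_sum fun i _ => step1 t i
      _ = η ^ 2 * (⌊1 / δ⌋₊ : ℝ) * ∑ i : Fin N, ∑ τ ∈ Finset.Ico (⌊1 / δ⌋₊ * (t / ⌊1 / δ⌋₊)) t, ∫ ω, ‖(g τ i ω - q τ i ω) - (N : ℝ)⁻¹ • ∑ j, (g τ j ω - q τ j ω)‖ ^ 2 ∂μ := by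
          rw [← Finset.mul_sum]
      _ = η ^ 2 * (⌊1 / δ⌋₊ : ℝ) * ∑ τ ∈ Finset.Ico (⌊1 / δ⌋₊ * (t / ⌊1 / δ⌋₊)) t, ∑ i, ∫ ω, ‖(g τ i ω - q τ i ω) - (N : ℝ)⁻¹ • ∑ j, (g τ j ω - q τ j ω)‖ ^ 2 ∂μ := by
          rw [Finset.sum_comm]
  have hc0 : ∀ τ, (0 : ℝ) ≤ ∑ i, ∫ ω, ‖(g τ i ω - q τ i ω) - (N : ℝ)⁻¹ • ∑ j, (g τ j ω - q τ j ω)‖ ^ 2 ∂μ :=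
    fun τ => Finset.sum_nonneg fun i _ => integral_nonneg fun ω => sq_nonneg _
  have main3 : (∑ t ∈ Finset.range T, ∑ i, ∫ ω, ‖((N : ℝ)⁻¹ • ∑ j, x t j ω) - x t i ω‖ ^ 2 ∂μ)
      ≤ η ^ 2 * (⌊1 / δ⌋₊ : ℝ) * ((⌊1 / δ⌋₊ : ℝ) * ∑ τ ∈ Finset.range T, ∑ i, ∫ ω, ‖(g τ i ω - q τ i ω) - (N : ℝ)⁻¹ • ∑ j, (g τ j ω - q τ j ω)‖ ^ 2 ∂μ) := by
    calc (∑ t ∈ Finset.range T, ∑ i, ∫ ω, ‖((N : ℝ)⁻¹ • ∑ j, x t j ω) - x t i ω‖ ^ 2 ∂μ)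
        ≤ ∑ t ∈ Finset.range T, (η ^ 2 * (⌊1 / δ⌋₊ : ℝ) * ∑ τ ∈ Finset.Ico (⌊1 / δ⌋₊ * (t / ⌊1 / δ⌋₊)) t, ∑ i, ∫ ω, ‖(g τ i ω - q τ i ω) - (N : ℝ)⁻¹ • ∑ j, (g τ j ω - q τ j ω)‖ ^ 2 ∂μ) :=
          Finset.sum_le_sum fun t _ => main1 t
      _ = η ^ 2 * (⌊1 / δ⌋₊ : ℝ) * ∑ t ∈ Finset.range T, ∑ τ ∈ Finset.Ico (⌊1 / δ⌋₊ * (t / ⌊1 / δ⌋₊)) t, ∑ i, ∫ ω, ‖(g τ i ω - q τ i ω) - (N : ℝ)⁻¹ • ∑ j, (g τ j ω - q τ j ω)‖ ^ 2 ∂μ := by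
          rw [← Finset.mul_sum]
      _ ≤ η ^ 2 * (⌊1 / δ⌋₊ : ℝ) * ((⌊1 / δ⌋₊ : ℝ) * ∑ τ ∈ Finset.range T, ∑ i, ∫ ω, ‖(g τ i ω - q τ i ω) - (N : ℝ)⁻¹ • ∑ j, (g τ j ω - q τ j ω)‖ ^ 2 ∂μ) :=
          mul_le_mul_of_nonneg_left
            (aux_count (⌊1 / δ⌋₊) T hFK0 (fun τ => ∑ i, ∫ ω, ‖(g τ i ω - q τ i ω) - (N : ℝ)⁻¹ • ∑ j, (g τ j ω - q τ j ω)‖ ^ 2 ∂μ) hc0) (by positivity)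
  have main4 : ∑ τ ∈ Finset.range T, ∑ i, ∫ ω, ‖(g τ i ω - q τ i ω) - (N : ℝ)⁻¹ • ∑ j, (g τ j ω - q τ j ω)‖ ^ 2 ∂μ
      ≤ (1 - δ) * ((T : ℝ) * (N : ℝ) * σ ^ 2 + 2 * (N : ℝ) * (∑ t ∈ Finset.range T, ∫ ω, ‖gF ((N : ℝ)⁻¹ • ∑ j, x t j ω)‖ ^ 2 ∂μ)
          + 2 * L ^ 2 * (∑ t ∈ Finset.range T, ∑ i, ∫ ω, ‖((N : ℝ)⁻¹ • ∑ j, x t j ω) - x t i ω‖ ^ 2 ∂μ)) := by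
    calc ∑ τ ∈ Finset.range T, ∑ i, ∫ ω, ‖(g τ i ω - q τ i ω) - (N : ℝ)⁻¹ • ∑ j, (g τ j ω - q τ j ω)‖ ^ 2 ∂μ
        ≤ ∑ τ ∈ Finset.range T, ((1 - δ) * ((N : ℝ) * σ ^ 2 + 2 * (N : ℝ) * (∫ ω, ‖gF ((N : ℝ)⁻¹ • ∑ j, x τ j ω)‖ ^ 2 ∂μ)
            + 2 * L ^ 2 * ∑ i, ∫ ω, ‖((N : ℝ)⁻¹ • ∑ j, x τ j ω) - x τ i ω‖ ^ 2 ∂μ)) := Finset.sum_le_sum fun τ _ => main2 τ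
      _ = (1 - δ) * ((T : ℝ) * (N : ℝ) * σ ^ 2 + 2 * (N : ℝ) * (∑ t ∈ Finset.range T, ∫ ω, ‖gF ((N : ℝ)⁻¹ • ∑ j, x t j ω)‖ ^ 2 ∂μ)
            + 2 * L ^ 2 * (∑ t ∈ Finset.range T, ∑ i, ∫ ω, ‖((N : ℝ)⁻¹ • ∑ j, x t j ω) - x t i ω‖ ^ 2 ∂μ)) := by
          rw [← Finset.mul_sum]
          congr 1
          simp only [Finset.sum_add_distrib, Finset.sum_const, Finset.card_range,
            nsmul_eq_mul, ← Finset.mul_sum]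
          ring
  have hP0 : (0 : ℝ) ≤ (∑ t ∈ Finset.range T, ∑ i, ∫ ω, ‖((N : ℝ)⁻¹ • ∑ j, x t j ω) - x t i ω‖ ^ 2 ∂μ) :=
    Finset.sum_nonneg fun t _ => Finset.sum_nonneg fun i _ =>
      integral_nonneg fun ω => sq_nonneg _
  have hSG0 : (0 : ℝ) ≤ (∑ t ∈ Finset.range T, ∫ ω, ‖gF ((N : ℝ)⁻¹ • ∑ j, x t j ω)‖ ^ 2 ∂μ) :=
    Finset.sum_nonneg fun t _ => integral_nonneg fun ω => sq_nonneg _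
  have hmainP : (∑ t ∈ Finset.range T, ∑ i, ∫ ω, ‖((N : ℝ)⁻¹ • ∑ j, x t j ω) - x t i ω‖ ^ 2 ∂μ) ≤ η ^ 2 * ((⌊1 / δ⌋₊ : ℕ) : ℝ) ^ 2 * ((1 - δ) * ((T : ℝ) * (N : ℝ) * σ ^ 2
      + 2 * (N : ℝ) * (∑ t ∈ Finset.range T, ∫ ω, ‖gF ((N : ℝ)⁻¹ • ∑ j, x t j ω)‖ ^ 2 ∂μ) + 2 * L ^ 2 * (∑ t ∈ Finset.range T, ∑ i, ∫ ω, ‖((N : ℝ)⁻¹ • ∑ j, x t j ω) - x t i ω‖ ^ 2 ∂μ))) := by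
    calc (∑ t ∈ Finset.range T, ∑ i, ∫ ω, ‖((N : ℝ)⁻¹ • ∑ j, x t j ω) - x t i ω‖ ^ 2 ∂μ)
        ≤ η ^ 2 * (⌊1 / δ⌋₊ : ℝ) * ((⌊1 / δ⌋₊ : ℝ) * ∑ τ ∈ Finset.range T, ∑ i, ∫ ω, ‖(g τ i ω - q τ i ω) - (N : ℝ)⁻¹ • ∑ j, (g τ j ω - q τ j ω)‖ ^ 2 ∂μ) := main3
      _ ≤ η ^ 2 * (⌊1 / δ⌋₊ : ℝ) * ((⌊1 / δ⌋₊ : ℝ) * ((1 - δ) * ((T : ℝ) * (N : ℝ) * σ ^ 2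
            + 2 * (N : ℝ) * (∑ t ∈ Finset.range T, ∫ ω, ‖gF ((N : ℝ)⁻¹ • ∑ j, x t j ω)‖ ^ 2 ∂μ) + 2 * L ^ 2 * (∑ t ∈ Finset.range T, ∑ i, ∫ ω, ‖((N : ℝ)⁻¹ • ∑ j, x t j ω) - x t i ω‖ ^ 2 ∂μ)))) := by
          refine mul_le_mul_of_nonneg_left (mul_le_mul_of_nonneg_left main4 ?_) (by positivity)
          positivity
      _ = η ^ 2 * ((⌊1 / δ⌋₊ : ℕ) : ℝ) ^ 2 * ((1 - δ) * ((T : ℝ) * (N : ℝ) * σ ^ 2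
            + 2 * (N : ℝ) * (∑ t ∈ Finset.range T, ∫ ω, ‖gF ((N : ℝ)⁻¹ • ∑ j, x t j ω)‖ ^ 2 ∂μ) + 2 * L ^ 2 * (∑ t ∈ Finset.range T, ∑ i, ∫ ω, ‖((N : ℝ)⁻¹ • ∑ j, x t j ω) - x t i ω‖ ^ 2 ∂μ))) := by ring
  -- scalar bounds
  have hK2 : (((⌊1 / δ⌋₊ : ℕ) : ℝ)) ^ 2 ≤ 1 / δ ^ 2 := by
    have h1 : (((⌊1 / δ⌋₊ : ℕ) : ℝ)) ^ 2 ≤ (1 / δ) ^ 2 :=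
      pow_le_pow_left₀ (by positivity) hKδ 2
    calc (((⌊1 / δ⌋₊ : ℕ) : ℝ)) ^ 2 ≤ (1 / δ) ^ 2 := h1
      _ = 1 / δ ^ 2 := by rw [div_pow, one_pow]
  have hηL : η ^ 2 * L ^ 2 ≤ δ ^ 2 / 6 := by
    have h6 : (0 : ℝ) < Real.sqrt 6 := Real.sqrt_pos.mpr (by norm_num)
    have h1 : η * (Real.sqrt 6 * L) ≤ δ := (le_div_iff₀ (by positivity)).mp hη
    have h2 : (η * (Real.sqrt 6 * L)) ^ 2 ≤ δ ^ 2 := pow_le_pow_left₀ (by positivity) h1 2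
    have h3 : Real.sqrt 6 ^ 2 = 6 := Real.sq_sqrt (by norm_num)
    nlinarith [h2, h3]
  have hcoef : η ^ 2 * (((⌊1 / δ⌋₊ : ℕ) : ℝ)) ^ 2 * (1 - δ) * (2 * L ^ 2) ≤ 1 / 3 := by
    have hδne : δ ≠ 0 := ne_of_gt hδ0
    have h16 : (δ ^ 2 / 6) * (1 / δ ^ 2) = 1 / 6 := by field_simp
    calc η ^ 2 * (((⌊1 / δ⌋₊ : ℕ) : ℝ)) ^ 2 * (1 - δ) * (2 * L ^ 2)
        = 2 * (1 - δ) * ((η ^ 2 * L ^ 2) * (((⌊1 / δ⌋₊ : ℕ) : ℝ)) ^ 2) := by ring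
      _ ≤ 2 * 1 * ((δ ^ 2 / 6) * (1 / δ ^ 2)) := by
          have hm : (η ^ 2 * L ^ 2) * (((⌊1 / δ⌋₊ : ℕ) : ℝ)) ^ 2 ≤ (δ ^ 2 / 6) * (1 / δ ^ 2) :=
            mul_le_mul hηL hK2 (by positivity) (by positivity)
          have hd1 : (1 - δ) ≤ 1 := by linarith
          have hmn : (0 : ℝ) ≤ (η ^ 2 * L ^ 2) * (((⌊1 / δ⌋₊ : ℕ) : ℝ)) ^ 2 := by positivity
          nlinarith [hm, hd1, hδ', hmn]
      _ = 1 / 3 := by rw [h16]; norm_num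
  have hαβ : η ^ 2 * (((⌊1 / δ⌋₊ : ℕ) : ℝ)) ^ 2 * (1 - δ) ≤ (1 - δ) * η ^ 2 / δ ^ 2 := by
    have hmn : (0 : ℝ) ≤ (1 - δ) * η ^ 2 := mul_nonneg hδ' (sq_nonneg η)
    calc η ^ 2 * (((⌊1 / δ⌋₊ : ℕ) : ℝ)) ^ 2 * (1 - δ)
        = ((1 - δ) * η ^ 2) * (((⌊1 / δ⌋₊ : ℕ) : ℝ)) ^ 2 := by ring
      _ ≤ ((1 - δ) * η ^ 2) * (1 / δ ^ 2) := mul_le_mul_of_nonneg_left hK2 hmn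
      _ = (1 - δ) * η ^ 2 / δ ^ 2 := by ring
  have hX0 : (0 : ℝ) ≤ (T : ℝ) * (N : ℝ) * σ ^ 2 + 2 * (N : ℝ) * (∑ t ∈ Finset.range T, ∫ ω, ‖gF ((N : ℝ)⁻¹ • ∑ j, x t j ω)‖ ^ 2 ∂μ) := by
    have h1 : (0 : ℝ) ≤ (T : ℝ) * (N : ℝ) * σ ^ 2 := by positivity
    have h2 : (0 : ℝ) ≤ 2 * (N : ℝ) * (∑ t ∈ Finset.range T, ∫ ω, ‖gF ((N : ℝ)⁻¹ • ∑ j, x t j ω)‖ ^ 2 ∂μ) := by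
      apply mul_nonneg (by positivity) hSG0
    linarith
  have e2 : (η ^ 2 * (((⌊1 / δ⌋₊ : ℕ) : ℝ)) ^ 2 * (1 - δ))
        * ((T : ℝ) * (N : ℝ) * σ ^ 2 + 2 * (N : ℝ) * (∑ t ∈ Finset.range T, ∫ ω, ‖gF ((N : ℝ)⁻¹ • ∑ j, x t j ω)‖ ^ 2 ∂μ))
      ≤ ((1 - δ) * η ^ 2 / δ ^ 2) * ((T : ℝ) * (N : ℝ) * σ ^ 2 + 2 * (N : ℝ) * (∑ t ∈ Finset.range T, ∫ ω, ‖gF ((N : ℝ)⁻¹ • ∑ j, x t j ω)‖ ^ 2 ∂μ)) :=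
    mul_le_mul_of_nonneg_right hαβ hX0
  have e3 : (η ^ 2 * (((⌊1 / δ⌋₊ : ℕ) : ℝ)) ^ 2 * (1 - δ) * (2 * L ^ 2)) * (∑ t ∈ Finset.range T, ∑ i, ∫ ω, ‖((N : ℝ)⁻¹ • ∑ j, x t j ω) - x t i ω‖ ^ 2 ∂μ)
      ≤ (1 / 3) * (∑ t ∈ Finset.range T, ∑ i, ∫ ω, ‖((N : ℝ)⁻¹ • ∑ j, x t j ω) - x t i ω‖ ^ 2 ∂μ) := mul_le_mul_of_nonneg_right hcoef hP0
  have e4 : (∑ t ∈ Finset.range T, ∑ i, ∫ ω, ‖((N : ℝ)⁻¹ • ∑ j, x t j ω) - x t i ω‖ ^ 2 ∂μ) ≤ ((1 - δ) * η ^ 2 / δ ^ 2)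
      * ((T : ℝ) * (N : ℝ) * σ ^ 2 + 2 * (N : ℝ) * (∑ t ∈ Finset.range T, ∫ ω, ‖gF ((N : ℝ)⁻¹ • ∑ j, x t j ω)‖ ^ 2 ∂μ)) + (1 / 3) * (∑ t ∈ Finset.range T, ∑ i, ∫ ω, ‖((N : ℝ)⁻¹ • ∑ j, x t j ω) - x t i ω‖ ^ 2 ∂μ) := by
    nlinarith [hmainP, e2, e3]
  have e5 : (∑ t ∈ Finset.range T, ∑ i, ∫ ω, ‖((N : ℝ)⁻¹ • ∑ j, x t j ω) - x t i ω‖ ^ 2 ∂μ) ≤ (3 / 2) * (((1 - δ) * η ^ 2 / δ ^ 2)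
      * ((T : ℝ) * (N : ℝ) * σ ^ 2 + 2 * (N : ℝ) * (∑ t ∈ Finset.range T, ∫ ω, ‖gF ((N : ℝ)⁻¹ • ∑ j, x t j ω)‖ ^ 2 ∂μ))) := by linarith
  have hβ0 : (0 : ℝ) ≤ (1 - δ) * η ^ 2 / δ ^ 2 :=
    div_nonneg (mul_nonneg hδ' (sq_nonneg η)) (sq_nonneg δ)
  have e6 : (N : ℝ)⁻¹ * (∑ t ∈ Finset.range T, ∑ i, ∫ ω, ‖((N : ℝ)⁻¹ • ∑ j, x t j ω) - x t i ω‖ ^ 2 ∂μ)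
      ≤ (N : ℝ)⁻¹ * ((3 / 2) * (((1 - δ) * η ^ 2 / δ ^ 2)
        * ((T : ℝ) * (N : ℝ) * σ ^ 2 + 2 * (N : ℝ) * (∑ t ∈ Finset.range T, ∫ ω, ‖gF ((N : ℝ)⁻¹ • ∑ j, x t j ω)‖ ^ 2 ∂μ)))) :=
    mul_le_mul_of_nonneg_left e5 (inv_nonneg.mpr hNR.le)
  have e7 : (N : ℝ)⁻¹ * ((3 / 2) * (((1 - δ) * η ^ 2 / δ ^ 2)
        * ((T : ℝ) * (N : ℝ) * σ ^ 2 + 2 * (N : ℝ) * (∑ t ∈ Finset.range T, ∫ ω, ‖gF ((N : ℝ)⁻¹ • ∑ j, x t j ω)‖ ^ 2 ∂μ))))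
      = (3 / 2) * ((1 - δ) * η ^ 2 / δ ^ 2) * (T : ℝ) * σ ^ 2
        + 3 * ((1 - δ) * η ^ 2 / δ ^ 2) * (∑ t ∈ Finset.range T, ∫ ω, ‖gF ((N : ℝ)⁻¹ • ∑ j, x t j ω)‖ ^ 2 ∂μ) := by
    field_simp
  have e8 : (0 : ℝ) ≤ ((1 - δ) * η ^ 2 / δ ^ 2) * ((T : ℝ) * σ ^ 2) :=
    mul_nonneg hβ0 (by positivity)
  have e9 : (0 : ℝ) ≤ ((1 - δ) * η ^ 2 / δ ^ 2) * (∑ t ∈ Finset.range T, ∫ ω, ‖gF ((N : ℝ)⁻¹ • ∑ j, x t j ω)‖ ^ 2 ∂μ) := mul_nonneg hβ0 hSG0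
  have e10 : (N : ℝ)⁻¹ * (∑ t ∈ Finset.range T, ∑ i, ∫ ω, ‖((N : ℝ)⁻¹ • ∑ j, x t j ω) - x t i ω‖ ^ 2 ∂μ)
      ≤ (3 / 2) * ((1 - δ) * η ^ 2 / δ ^ 2) * (T : ℝ) * σ ^ 2
        + 3 * ((1 - δ) * η ^ 2 / δ ^ 2) * (∑ t ∈ Finset.range T, ∫ ω, ‖gF ((N : ℝ)⁻¹ • ∑ j, x t j ω)‖ ^ 2 ∂μ) := by
    calc (N : ℝ)⁻¹ * (∑ t ∈ Finset.range T, ∑ i, ∫ ω, ‖((N : ℝ)⁻¹ • ∑ j, x t j ω) - x t i ω‖ ^ 2 ∂μ) ≤ _ := e6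
      _ = _ := e7
  ring_nf at e10 e8 e9 ⊢
  linarith [e10, e8, e9]
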